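/- Define f₃ : [0,1] → [0,1] by f₃(x) = 1 − (1−x)^α with α = log 2 / log 3. Then f₃(0) = 0, f₃(1) = 1, f₃(x) ≤ c(x) for all x ∈ [0,1], and f₃(x) ≤ x for all x ∈ [0,1], where c is the Cantor function. -/

import Mathlib

noncomputable def modCont (f : ℝ → ℝ) (a b : ℝ) (δ : ℝ) : ℝ :=
  sSup {d : ℝ | ∃ x ∈ Set.Icc a b, ∃ y ∈ Set.Icc a b, |x - y| ≤ δ ∧ d = |f x - f y|}

def AbsolutelyContinuousOn (g : ℝ → ℝ) (a b : ℝ) : Prop :=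
  ∀ ε > (0:ℝ), ∃ δ > (0:ℝ), ∀ n : ℕ, ∀ x y : ℕ → ℝ,
    (∀ i < n, a ≤ x i ∧ x i ≤ y i ∧ y i ≤ b) →
    (∀ i < n, ∀ j < n, i ≠ j → Disjoint (Set.Ioo (x i) (y i)) (Set.Ioo (x j) (y j))) →
    (∑ i ∈ Finset.range n, (y i - x i)) < δ →
    (∑ i ∈ Finset.range n, |g (y i) - g (x i)|) < ε

/-- The standard Cantor function is the unique monotone function on `[0,1]` with
`c 0 = 0`, `c 1 = 1`, satisfying the self-similarity relations
`c (x/3) = c x / 2` and `c ((x+2)/3) = (1 + c x)/2`. -/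
def IsCantorFunction (c : ℝ → ℝ) : Prop :=
  MonotoneOn c (Set.Icc 0 1) ∧ c 0 = 0 ∧ c 1 = 1 ∧
  (∀ x ∈ Set.Icc (0:ℝ) 1, c (x / 3) = c x / 2) ∧
  (∀ x ∈ Set.Icc (0:ℝ) 1, c ((x + 2) / 3) = (1 + c x) / 2)

noncomputable def cantorAlpha : ℝ := Real.log 2 / Real.log 3

section CantorAux

private lemma log3_pos : (0:ℝ) < Real.log 3 := Real.log_pos (by norm_num)

private lemma alpha_pos : (0:ℝ) < Real.log 2 / Real.log 3 :=
  div_pos (Real.log_pos (by norm_num)) log3_pos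

private lemma alpha_le_one : Real.log 2 / Real.log 3 ≤ 1 :=
  (div_le_one log3_pos).2 (Real.log_le_log (by norm_num) (by norm_num))

private lemma three_rpow : (3:ℝ) ^ (Real.log 2 / Real.log 3) = 2 := by
  have h : Real.log 3 * (Real.log 2 / Real.log 3) = Real.log 2 := by
    field_simp
  rw [Real.rpow_def_of_pos (by norm_num), h, Real.exp_log (by norm_num)]

private lemma third_rpow : ((1:ℝ)/3) ^ (Real.log 2 / Real.log 3) = 1/2 := by
  rw [Real.div_rpow zero_le_one (by norm_num), Real.one_rpow, three_rpow]

/-- Concave increment inequality: `(a+2)^α ≥ 1 + a^α` for `a ∈ [0,1]`. -/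
private lemma key_concave {a : ℝ} (ha0 : 0 ≤ a) (ha1 : a ≤ 1) :
    1 + a ^ (Real.log 2 / Real.log 3) ≤ (a + 2) ^ (Real.log 2 / Real.log 3) := by
  set α := Real.log 2 / Real.log 3 with hα
  have hconc := Real.concaveOn_rpow alpha_pos.le alpha_le_one
  have h3a : (0:ℝ) < 3 - a := by linarith
  set μ : ℝ := (1 - a) / (3 - a) with hμdef
  set l : ℝ := 2 / (3 - a) with hldef
  have hμ : (0:ℝ) ≤ μ := by apply div_nonneg <;> linarith
  have hl : (0:ℝ) ≤ l := by apply div_nonneg <;> linarith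
  have hsum : μ + l = 1 := by
    rw [hμdef, hldef, ← add_div, div_eq_one_iff_eq h3a.ne']; ring
  have ha : a ∈ Set.Ici (0:ℝ) := ha0
  have h3 : (3:ℝ) ∈ Set.Ici (0:ℝ) := by norm_num
  have h1 := hconc.2 ha h3 hμ hl hsum
  have h2 := hconc.2 ha h3 hl hμ (by linarith)
  simp only [smul_eq_mul] at h1 h2
  have e1 : μ * a + l * 3 = a + 2 := by
    rw [hμdef, hldef]; field_simp; ring
  have e2 : l * a + μ * 3 = 1 := by
    rw [hμdef, hldef]; field_simp; ring
  rw [e1, three_rpow] at h1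
  rw [e2, three_rpow, Real.one_rpow] at h2
  have hs := add_le_add h1 h2
  have hfin : a ^ α * (μ + l) + 2 * (μ + l) ≤ (a + 2) ^ α + 1 := by rw [← hα] at hs; ring_nf; ring_nf at hs; linarith
  rw [hsum] at hfin; linarith

private lemma cantor_ind (c : ℝ → ℝ) (hc : IsCantorFunction c) :
    ∀ n : ℕ, ∀ x ∈ Set.Icc (0:ℝ) 1,
      1 - (1 - x) ^ (Real.log 2 / Real.log 3) - (1/2)^n ≤ c x := by
  obtain ⟨hmono, h0, h1, hrel1, hrel2⟩ := hc
  set α := Real.log 2 / Real.log 3 with hα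
  intro n
  induction n with
  | zero =>
    intro x hx
    have hnn : 0 ≤ (1 - x) ^ α := Real.rpow_nonneg (by linarith [hx.2]) α
    have hcx : c 0 ≤ c x := hmono (by norm_num) hx hx.1
    simp only [pow_zero]
    linarith [h0 ▸ hcx]
  | succ n ih =>
    intro x hx
    obtain ⟨hx0, hx1⟩ := hx
    have hp : ((1:ℝ)/2)^(n+1) = (1/2)^n / 2 := by rw [pow_succ]; ring
    rcases le_or_gt x (1/3) with hA | hA
    · -- x ∈ [0, 1/3]
      have hy : (3*x) ∈ Set.Icc (0:ℝ) 1 := ⟨by linarith, by linarith⟩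
      have hcx : c x = c (3*x) / 2 := by
        have := hrel1 (3*x) hy
        rwa [show (3*x)/3 = x by ring] at this
      have hkey := key_concave (a := 1 - 3*x) (by linarith) (by linarith)
      rw [show (1 - 3*x) + 2 = 3*(1-x) by ring,
        Real.mul_rpow (by norm_num) (by linarith), three_rpow] at hkey
      have hIH := ih (3*x) hy
      rw [hcx]
      linarith
    · rcases le_or_gt x (2/3) with hB | hB
      · -- x ∈ [1/3, 2/3]
        have hc13 : c (1/3) = 1/2 := by
          have := hrel1 1 ⟨by norm_num, le_refl 1⟩
          rw [h1] at this; simpa using this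
        have hcx : c (1/3) ≤ c x := hmono (by norm_num) ⟨hx0, hx1⟩ (by linarith)
        have hb : ((1:ℝ)/3) ^ α ≤ (1-x) ^ α :=
          Real.rpow_le_rpow (by norm_num) (by linarith) alpha_pos.le
        rw [third_rpow] at hb
        have hpow : (0:ℝ) ≤ (1/2:ℝ)^(n+1) := by positivity
        linarith [hc13 ▸ hcx]
      · -- x ∈ [2/3, 1]
        have hy : (3*x - 2) ∈ Set.Icc (0:ℝ) 1 := ⟨by linarith, by linarith⟩
        have hcx : c x = (1 + c (3*x - 2)) / 2 := by
          have := hrel2 (3*x - 2) hy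
          rwa [show (3*x - 2 + 2)/3 = x by ring] at this
        have hIH := ih (3*x - 2) hy
        have he : (1 - (3*x - 2)) ^ α = 2 * (1-x) ^ α := by
          rw [show (1:ℝ) - (3*x - 2) = 3*(1-x) by ring,
            Real.mul_rpow (by norm_num) (by linarith), three_rpow]
        rw [he] at hIH
        rw [hcx]
        linarith

private lemma cantor_lower (c : ℝ → ℝ) (hc : IsCantorFunction c) :
    ∀ x ∈ Set.Icc (0:ℝ) 1, 1 - (1 - x) ^ (Real.log 2 / Real.log 3) ≤ c x := by
  intro x hx
  refine le_of_forall_pos_le_add fun ε hε => ?_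
  obtain ⟨n, hn⟩ := exists_pow_lt_of_lt_one hε (by norm_num : (1:ℝ)/2 < 1)
  have := cantor_ind c hc n x hx
  linarith

end CantorAux

theorem stmt6 (c : ℝ → ℝ) (hc : IsCantorFunction c)
    (f₃ : ℝ → ℝ) (hf₃ : ∀ x, f₃ x = 1 - (1 - x) ^ (Real.log 2 / Real.log 3)) :
    f₃ 0 = 0 ∧ f₃ 1 = 1 ∧
    (∀ x ∈ Set.Icc (0:ℝ) 1, f₃ x ≤ c x) ∧
    (∀ x ∈ Set.Icc (0:ℝ) 1, f₃ x ≤ x) := by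
  refine ⟨?_, ?_, ?_, ?_⟩
  · rw [hf₃]; norm_num
  · rw [hf₃]; norm_num [Real.zero_rpow alpha_pos.ne']
  · intro x hx
    rw [hf₃]
    exact cantor_lower c hc x hx
  · intro x hx
    rw [hf₃]
    rcases eq_or_lt_of_le hx.2 with h | h
    · subst h
      simp [Real.zero_rpow alpha_pos.ne']
    · have h0 : 0 < 1 - x := by linarith
      have := Real.rpow_le_rpow_of_exponent_ge h0 (by linarith [hx.1]) alpha_le_one
      rw [Real.rpow_one] at this
      linarith
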